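/- arXiv:2011.14895 — 3 statements merged into one kernel-verified Lean document; each statement's English description precedes it below -/
import Mathlib

section
/- For every input x ∈ ℝ^{n_0} and every compatible activation pattern s ∈ S^C(x), the set of inputs with the same objective hyperplane pattern as x equals the set of inputs with the same subjective hyperplane pattern as x: {y ∈ ℝ^{n_0} : H(y)=H(x)} = {y ∈ ℝ^{n_0} : H̃_s(y)=H̃_s(x)}. -/
/-!
Formalization of the setting of "Deep ReLU Programming" (Hinz & van de Geer).

A feed-forward ReLU network with `L` hidden layers and widths `n 0, …, n (L+1)`
(`n (L+1) = 1` for a real-valued network) is encoded by the structure `Net L n`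
below, where `W k : Matrix (Fin (n (k+1))) (Fin (n k)) ℝ` and
`b k : Fin (n (k+1)) → ℝ` are the weight matrix and bias vector of layer `k+1`
(so the paper's `W_l, b_l` correspond to `W (l-1), b (l-1)` here).

A neuron `(l, j)` of the paper (layer `l ∈ {1, …, L}`, neuron `j`) is encoded as
the pair `⟨k, j⟩ : Idx n` with `k = l - 1`; membership in the index set `I`
corresponds to the condition `k < L`.
-/

noncomputable section
open Metric Filter Topology
open scoped Classical RealInnerProductSpace BigOperators

namespace DRLP

/-- Input space `ℝ^{n 0}` with the Euclidean metric and inner product. -/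
abbrev Input (n : ℕ → ℕ) := EuclideanSpace ℝ (Fin (n 0))

/-- Patterns: one real number for each neuron `⟨k, j⟩` (neuron `j` of layer `k+1`). -/
abbrev Pat (n : ℕ → ℕ) := ∀ k : ℕ, Fin (n (k+1)) → ℝ

/-- Neuron indices: `⟨k, j⟩` denotes neuron `j` of layer `k+1`. -/
abbrev Idx (n : ℕ → ℕ) := Σ k : ℕ, Fin (n (k+1))

/-- `s` is an activation pattern (element of `S = {0,1}^{n_1} × ⋯ × {0,1}^{n_L}`). -/
def IsPattern (L : ℕ) {n : ℕ → ℕ} (s : Pat n) : Prop :=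
  ∀ k < L, ∀ j, s k j = 0 ∨ s k j = 1

/-- Compatibility of a (hyperplane) pattern `h` with an activation pattern `s`:
`h_{lj} (s_{lj} - 0.5) ≥ 0` for all neurons `(l,j) ∈ I`. -/
def PatCompatible (L : ℕ) {n : ℕ → ℕ} (h s : Pat n) : Prop :=
  ∀ k < L, ∀ j, h k j * (s k j - 1/2) ≥ 0

/-- A feed-forward ReLU network with `L` hidden layers and widths `n 0, …, n (L+1)`. -/
structure Net (L : ℕ) (n : ℕ → ℕ) : Type where
  W : ∀ k : ℕ, Matrix (Fin (n (k+1))) (Fin (n k)) ℝ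
  b : ∀ k : ℕ, Fin (n (k+1)) → ℝ

namespace Net

variable {L : ℕ} {n : ℕ → ℕ} (N : Net L n)

/-- Output of layer `k` (entrywise ReLU applied); layer `0` is the input itself. -/
def hid (x : Input n) : (k : ℕ) → Fin (n k) → ℝ
  | 0 => fun i => x i
  | k + 1 => fun j => max ((N.W k).mulVec (hid x k) j + N.b k j) 0

/-- The ReLU arguments `A(x)`: pre-activation of neuron `j` in layer `k+1`. -/
def preact (x : Input n) (k : ℕ) (j : Fin (n (k+1))) : ℝ :=
  (N.W k).mulVec (N.hid x k) j + N.b k j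

/-- The hyperplane pattern `H(x) = sign.(A(x))`. -/
def Hpat (x : Input n) (k : ℕ) (j : Fin (n (k+1))) : ℝ :=
  Real.sign (N.preact x k j)

/-- Subjective hidden layers: activations frozen to the pattern `s`. -/
def shid (s : Pat n) (x : Input n) : (k : ℕ) → Fin (n k) → ℝ
  | 0 => fun i => x i
  | k + 1 => fun j => s k j * ((N.W k).mulVec (shid s x k) j + N.b k j)

/-- The subjective ReLU arguments `Ã_s(x)`. -/
def spreact (s : Pat n) (x : Input n) (k : ℕ) (j : Fin (n (k+1))) : ℝ :=
  (N.W k).mulVec (N.shid s x k) j + N.b k j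

/-- The subjective hyperplane pattern `H̃_s(x) = sign.(Ã_s(x))`. -/
def sHpat (s : Pat n) (x : Input n) (k : ℕ) (j : Fin (n (k+1))) : ℝ :=
  Real.sign (N.spreact s x k j)

/-- `S^C(x)`: activation patterns compatible with the hyperplane pattern `H(x)`. -/
def SC (x : Input n) : Set (Pat n) :=
  {s | IsPattern L s ∧ PatCompatible L (N.Hpat x) s}

/-- `S̃^C(x)`: activation patterns compatible with their own induced subjective
hyperplane pattern `H̃_s(x)`. -/
def SCtilde (x : Input n) : Set (Pat n) :=
  {s | IsPattern L s ∧ PatCompatible L (N.sHpat s x) s}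

/-- `C(x)`: critical indices, i.e. neurons whose hyperplane pattern is non-constant in
every neighbourhood of `x`. -/
def Critical (x : Input n) (p : Idx n) : Prop :=
  p.1 < L ∧ ∀ ε > 0, ∃ y z : Input n, dist y x < ε ∧ dist z x < ε ∧
    N.Hpat y p.1 p.2 ≠ N.Hpat z p.1 p.2

/-- `C̃_s(x)`: subjective critical indices. -/
def sCritical (s : Pat n) (x : Input n) (p : Idx n) : Prop :=
  p.1 < L ∧ ∀ ε > 0, ∃ y z : Input n, dist y x < ε ∧ dist z x < ε ∧
    N.sHpat s y p.1 p.2 ≠ N.sHpat s z p.1 p.2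

/-- The critical kernel `Ker^C(x)`. -/
def KerC (x : Input n) : Set (Input n) :=
  {v | ∃ ε > 0, ∀ t : ℝ, |t| < ε → ∀ p : Idx n, p.1 < L →
    N.Hpat (x + t • v) p.1 p.2 = N.Hpat x p.1 p.2}

/-- The subjective critical kernel `K̃er^C_s(x)`. -/
def sKerC (s : Pat n) (x : Input n) : Set (Input n) :=
  {v | ∃ ε > 0, ∀ t : ℝ, |t| < ε → ∀ p : Idx n, p.1 < L →
    N.sHpat s (x + t • v) p.1 p.2 = N.sHpat s x p.1 p.2}

/-- Critical degrees of freedom `df^C(x) = dim Ker^C(x)`. -/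
def dfC (x : Input n) : ℕ :=
  Module.finrank ℝ (Submodule.span ℝ (N.KerC x))

/-- `x` is a vertex iff `df^C(x) = 0`. -/
def IsVertex (x : Input n) : Prop := N.dfC x = 0

/-- The matrix `W_{k+1} diag(s_k) W_k ⋯ diag(s_1) W_1`. -/
def sMat (s : Pat n) : (k : ℕ) → Matrix (Fin (n (k+1))) (Fin (n 0)) ℝ
  | 0 => N.W 0
  | k + 1 => N.W (k+1) * Matrix.diagonal (s k) * sMat s k

/-- The normal vector `ṽ_{s,l,j}` (transpose of the `j`-th row of
`W_l diag(s_{l-1}) ⋯ diag(s_1) W_1`). -/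
def nvec (s : Pat n) (p : Idx n) : Input n :=
  WithLp.toLp 2 (fun i => N.sMat s p.1 p.2 i)

/-- The oriented normal vector `ũ_{s,l,j}`. -/
def onvec (s : Pat n) (p : Idx n) : Input n :=
  if s p.1 p.2 = 1 then N.nvec s p else -N.nvec s p

/-- The gradient `∇_s = (W_{L+1} diag(s_L) ⋯ diag(s_1) W_1)ᵀ ∈ ℝ^{n_0}`. -/
def grad (h1 : n (L+1) = 1) (s : Pat n) : Input n :=
  N.nvec s ⟨L, Fin.cast h1.symm 0⟩

/-- The (real-valued) network function `f`. -/
def fnet (h1 : n (L+1) = 1) (x : Input n) : ℝ :=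
  N.preact x L (Fin.cast h1.symm 0)

/-- The subjective network function `f̃_s`. -/
def sfnet (h1 : n (L+1) = 1) (s : Pat n) (x : Input n) : ℝ :=
  N.spreact s x L (Fin.cast h1.symm 0)

/-- The feasible directions `D̃_s(x)`. -/
def Dfeas (s : Pat n) (x : Input n) : Set (Input n) :=
  {v | ∃ ε > 0, s ∈ N.SC (x + ε • v)}

/-- `x` is a regular point: for every compatible activation pattern `s ∈ S^C(x)`, the
normal vectors at the subjective critical indices are linearly independent. -/
def RegularPoint (x : Input n) : Prop :=
  ∀ s ∈ N.SC x, LinearIndependent ℝ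
    (fun p : {p : Idx n // N.sCritical s x p} => N.nvec s p.1)

/-- The network is regular if every point is a regular point. -/
def Regular : Prop := ∀ x : Input n, N.RegularPoint x

/-- `w` is the feasible axis `ã_{x,s,l,j}` at `x` for the activation pattern `s` and the
critical index `p = (l,j)`: it pairs to `1` with the oriented normal vector of `p` and
to `0` with the oriented normal vectors of all other critical indices of `x`. -/
def IsAxis (x : Input n) (s : Pat n) (p : Idx n) (w : Input n) : Prop :=
  ∀ q : Idx n, N.Critical x q → ⟪w, N.onvec s q⟫ = if p = q then 1 else 0

/-- The region separating axes `𝒜(x)`. -/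
def RegionSepAxes (x : Input n) : Set (Input n) :=
  {w | ∃ s ∈ N.SC x, ∃ p : Idx n, N.Critical x p ∧ N.IsAxis x s p w}

end Net

/-!
As long as every ReLU argument has a sign compatible with `s`, the frozen layer maps
`y ↦ diag(s_l)(W_l y + b_l)` agree with the ReLU layers, so the subjective and objective networks
coincide layer by layer. Compatibility may be checked on either side, because at each layer the two
ReLU arguments already agree once the layers below do. Both sets in the theorem consist of points
whose pattern is compatible with `s`, and there `H = H̃_s`.
-/

theorem mul_eq_max_zero_of_sign_mul_nonneg {a t : ℝ} (ha : a = 0 ∨ a = 1)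
    (h : Real.sign t * (a - 1/2) ≥ 0) : a * t = max t 0 := by
  rcases ha with rfl | rfl
  · have : t ≤ 0 := by
      by_contra! ht
      rw [Real.sign_of_pos ht] at h
      norm_num at h
    simp [this]
  · have : 0 ≤ t := by
      by_contra! ht
      rw [Real.sign_of_neg ht] at h
      norm_num at h
    simp [this]

namespace Net

variable {L : ℕ} {n : ℕ → ℕ} (N : Net L n) {s : Pat n} {y : Input n}

theorem spreact_eq_preact_of_shid_eq_hid {k : ℕ} (h : N.shid s y k = N.hid y k) (j) :
    N.spreact s y k j = N.preact y k j := by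
  simp only [spreact, preact, h]

theorem shid_eq_hid (hs : IsPattern L s)
    (hc : PatCompatible L (N.Hpat y) s ∨ PatCompatible L (N.sHpat s y) s) :
    ∀ k ≤ L, N.shid s y k = N.hid y k := by
  intro k
  induction k with
  | zero => intro _; rfl
  | succ k ih =>
    intro hk
    have hbelow := ih (by omega)
    have hpre := N.spreact_eq_preact_of_shid_eq_hid hbelow
    have hsign : ∀ j, Real.sign (N.preact y k j) * (s k j - 1/2) ≥ 0 := fun j => by
      rcases hc with hc | hc
      · exact hc k hk j
      · simpa only [sHpat, hpre] using hc k hk j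
    funext j
    change s k j * N.spreact s y k j = max (N.preact y k j) 0
    rw [hpre]
    exact mul_eq_max_zero_of_sign_mul_nonneg (hs k hk j) (hsign j)

theorem sHpat_eq_Hpat (hs : IsPattern L s)
    (hc : PatCompatible L (N.Hpat y) s ∨ PatCompatible L (N.sHpat s y) s)
    {k : ℕ} (hk : k < L) (j) : N.sHpat s y k j = N.Hpat y k j := by
  simp only [sHpat, Hpat, N.spreact_eq_preact_of_shid_eq_hid (N.shid_eq_hid hs hc k hk.le)]

end Net

/-- Corollary 2: for every `x` and every compatible `s ∈ S^C(x)`,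
`{y : H(y) = H(x)} = {y : H̃_s(y) = H̃_s(x)}`. -/
theorem statement3 {L : ℕ} {n : ℕ → ℕ} (N : Net L n) (x : Input n) (s : Pat n)
    (hs : s ∈ N.SC x) :
    {y : Input n | ∀ p : Idx n, p.1 < L → N.Hpat y p.1 p.2 = N.Hpat x p.1 p.2} =
      {y : Input n | ∀ p : Idx n, p.1 < L → N.sHpat s y p.1 p.2 = N.sHpat s x p.1 p.2} := by
  obtain ⟨hsP, hsC⟩ := hs
  have hx : ∀ k < L, ∀ j, N.sHpat s x k j = N.Hpat x k j :=
    fun k hk j => N.sHpat_eq_Hpat hsP (.inl hsC) hk j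
  ext y
  constructor
  · intro hy p hp
    have hcy : PatCompatible L (N.Hpat y) s := fun k hk j => by
      simpa only [hy ⟨k, j⟩ hk] using hsC k hk j
    rw [N.sHpat_eq_Hpat hsP (.inl hcy) hp, hy p hp, hx p.1 hp]
  · intro hy p hp
    have hcy : PatCompatible L (N.sHpat s y) s := fun k hk j => by
      simpa only [hy ⟨k, j⟩ hk, hx k hk j] using hsC k hk j
    rw [← N.sHpat_eq_Hpat hsP (.inr hcy) hp, hy p hp, hx p.1 hp]

end DRLP
end
end

section
/- For every x ∈ ℝ^{n_0} there exists ε* > 0 such that B_{ε*}(0) ∩ {v ∈ ℝ^{n_0} : H(x+v) = H(x)} = B_{ε*}(0) ∩ Ker^C(x); that is, locally around x the set of inputs with unchanged hyperplane pattern is exactly the affine subspace x + Ker^C(x). -/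
/-!
Formalization of the setting of "Deep ReLU Programming" (Hinz & van de Geer).

A feed-forward ReLU network with `L` hidden layers and widths `n 0, …, n (L+1)`
(`n (L+1) = 1` for a real-valued network) is encoded by the structure `Net L n`
below, where `W k : Matrix (Fin (n (k+1))) (Fin (n k)) ℝ` and
`b k : Fin (n (k+1)) → ℝ` are the weight matrix and bias vector of layer `k+1`
(so the paper's `W_l, b_l` correspond to `W (l-1), b (l-1)` here).

A neuron `(l, j)` of the paper (layer `l ∈ {1, …, L}`, neuron `j`) is encoded as
the pair `⟨k, j⟩ : Idx n` with `k = l - 1`; membership in the index set `I`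
corresponds to the condition `k < L`.
-/

noncomputable section
open Metric Filter Topology
open scoped Classical RealInnerProductSpace BigOperators

namespace DRLP

/-!
Let `s` be the activation pattern of `x`. Near `x` the nonzero ReLU arguments keep their sign,
so `H(y) = H(x)` says exactly that the ReLU arguments vanishing at `x` still vanish at `y`.
As long as this holds on the earlier layers, the network agrees with the subjective network
`Ã_s`, which is affine; so near `x` the inputs with unchanged pattern are `x` plus the kernel of
a linear map. Such a set is invariant under nonzero rescalings inside a ball around `0`, and
that alone forces it to agree there with the directions `v` along which the pattern is locally
constant, i.e. with `Ker^C(x)`.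
-/

theorem _root_.Real.sign_eq_one_iff {r : ℝ} : Real.sign r = 1 ↔ 0 < r := by
  rcases lt_trichotomy r 0 with h | rfl | h
  · norm_num [Real.sign_of_neg h, h.not_gt]
  · simp [Real.sign_zero]
  · simp [Real.sign_of_pos h, h]

theorem eventually_sign_eq_of_ne_zero {X : Type*} [TopologicalSpace X] {f : X → ℝ} {x : X}
    (hf : ContinuousAt f x) (hx : f x ≠ 0) : ∀ᶠ y in 𝓝 x, Real.sign (f y) = Real.sign (f x) := by
  rcases hx.lt_or_gt with h | h
  · filter_upwards [hf.eventually (gt_mem_nhds h)] with y hy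
    rw [Real.sign_of_neg hy, Real.sign_of_neg h]
  · filter_upwards [hf.eventually (lt_mem_nhds h)] with y hy
    rw [Real.sign_of_pos hy, Real.sign_of_pos h]

theorem ball_inter_setOf_eq_ball_inter_setOf_smul {E : Type*} [SeminormedAddCommGroup E]
    [NormedSpace ℝ E] {P : E → Prop} {ε : ℝ} (h0 : P 0)
    (hsmul : ∀ (v : E) (t : ℝ), t ≠ 0 → ‖v‖ < ε → ‖t • v‖ < ε → (P (t • v) ↔ P v)) :
    ball 0 ε ∩ {v | P v} = ball 0 ε ∩ {v | ∃ δ > 0, ∀ t : ℝ, |t| < δ → P (t • v)} := by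
  ext v
  simp only [Set.mem_inter_iff, mem_ball_zero_iff, Set.mem_ofPred_eq, and_congr_right_iff]
  intro hv
  constructor
  · intro hPv
    have hε : 0 < ε := (norm_nonneg v).trans_lt hv
    refine ⟨ε / (‖v‖ + 1), by positivity, fun t ht => ?_⟩
    rcases eq_or_ne t 0 with rfl | ht0
    · simpa using h0
    have htv : ‖t • v‖ < ε := by
      rw [lt_div_iff₀ (by positivity)] at ht
      rw [norm_smul, Real.norm_eq_abs]
      nlinarith [abs_nonneg t]
    exact (hsmul v t ht0 hv htv).mpr hPv
  · rintro ⟨δ, hδ, hPδ⟩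
    set t := min (δ / 2) 1
    have ht : 0 < t := by positivity
    have htv : ‖t • v‖ < ε := by
      rw [norm_smul, Real.norm_eq_abs, abs_of_pos ht]
      nlinarith [min_le_right (δ / 2) 1, norm_nonneg v]
    refine (hsmul v t ht.ne' hv htv).mp (hPδ t ?_)
    rw [abs_of_pos ht]
    exact (min_le_left _ _).trans_lt (half_lt_self hδ)

namespace Net

variable {L : ℕ} {n : ℕ → ℕ} (N : Net L n)

def actPattern (x : Input n) : Pat n :=
  fun k j => if 0 < N.preact x k j then 1 else 0

theorem continuous_hid (k : ℕ) : Continuous fun y : Input n => N.hid y k := by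
  induction k with
  | zero => exact PiLp.continuous_ofLp 2 _
  | succ k ih =>
    exact continuous_pi fun j => ((continuous_apply j).comp
      ((continuous_const.matrix_mulVec ih).add continuous_const)).max continuous_const

theorem continuous_preact (k : ℕ) (j : Fin (n (k+1))) :
    Continuous fun y : Input n => N.preact y k j :=
  (continuous_apply j).comp ((continuous_const.matrix_mulVec (N.continuous_hid k)).add
    continuous_const)

theorem eventually_sign_preact_eq (x : Input n) :
    ∀ᶠ y in 𝓝 x, ∀ k < L, ∀ j, N.preact x k j ≠ 0 →
      Real.sign (N.preact y k j) = Real.sign (N.preact x k j) := by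
  refine (Set.finite_Iio L).eventually_all.mpr fun k _ => eventually_all.mpr fun j => ?_
  by_cases hx : N.preact x k j = 0
  · exact .of_forall fun _ h => absurd hx h
  · filter_upwards [eventually_sign_eq_of_ne_zero (N.continuous_preact k j).continuousAt hx]
      with y hy using fun _ => hy

theorem shid_add_smul (s : Pat n) (x v : Input n) (t : ℝ) (k : ℕ) :
    N.shid s (x + t • v) k = N.shid s x k + t • (N.shid s (x + v) k - N.shid s x k) := by
  induction k with
  | zero => funext i; simp [shid]
  | succ k ih =>
    funext j
    simp only [shid, ih, Matrix.mulVec_add, Matrix.mulVec_smul, Matrix.mulVec_sub,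
      Pi.add_apply, Pi.smul_apply, Pi.sub_apply, smul_eq_mul]
    ring

theorem spreact_add_smul (s : Pat n) (x v : Input n) (t : ℝ) (k : ℕ) (j : Fin (n (k+1))) :
    N.spreact s (x + t • v) k j
      = N.spreact s x k j + t * (N.spreact s (x + v) k j - N.spreact s x k j) := by
  simp only [spreact, shid_add_smul, Matrix.mulVec_add, Matrix.mulVec_smul, Matrix.mulVec_sub,
    Pi.add_apply, Pi.smul_apply, Pi.sub_apply, smul_eq_mul]
  ring

variable {N}

theorem relu_preact_eq_actPattern_mul {x y : Input n} {k : ℕ} {j : Fin (n (k+1))}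
    (h : N.Hpat y k j = N.Hpat x k j) :
    max (N.preact y k j) 0 = N.actPattern x k j * N.preact y k j := by
  unfold Hpat at h
  by_cases hx : 0 < N.preact x k j
  · have hy : 0 < N.preact y k j := Real.sign_eq_one_iff.mp (h.trans (Real.sign_eq_one_iff.mpr hx))
    simp [actPattern, hx, hy.le]
  · have hy : N.preact y k j ≤ 0 :=
      not_lt.mp fun hy => hx (Real.sign_eq_one_iff.mp (h.symm.trans (Real.sign_eq_one_iff.mpr hy)))
    simp [actPattern, hx, hy]

theorem hid_eq_shid_of_hpat_eq {x y : Input n} {k : ℕ}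
    (h : ∀ k' < k, ∀ j, N.Hpat y k' j = N.Hpat x k' j) :
    N.hid y k = N.shid (N.actPattern x) y k := by
  induction k with
  | zero => rfl
  | succ k ih =>
    have hk := ih fun k' hk' => h k' (hk'.trans k.lt_succ_self)
    funext j
    change max (N.preact y k j) 0 = _
    rw [relu_preact_eq_actPattern_mul (h k k.lt_succ_self j)]
    simp only [shid, preact, hk]

theorem preact_eq_spreact_of_hpat_eq {x y : Input n} {k : ℕ} {j : Fin (n (k+1))}
    (h : ∀ k' < k, ∀ j, N.Hpat y k' j = N.Hpat x k' j) :
    N.preact y k j = N.spreact (N.actPattern x) y k j := by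
  simp only [preact, spreact, hid_eq_shid_of_hpat_eq h]

theorem hpat_eq_iff_spreact_eq_zero {x y : Input n}
    (hy : ∀ k < L, ∀ j, N.preact x k j ≠ 0 →
      Real.sign (N.preact y k j) = Real.sign (N.preact x k j)) :
    (∀ k < L, ∀ j, N.Hpat y k j = N.Hpat x k j) ↔
      ∀ k < L, ∀ j, N.preact x k j = 0 → N.spreact (N.actPattern x) y k j = 0 := by
  constructor
  · intro hH k hk j hx
    rw [← preact_eq_spreact_of_hpat_eq fun k' hk' => hH k' (hk'.trans hk)]
    simpa [Hpat, hx, Real.sign_eq_zero_iff] using hH k hk j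
  · intro hZ k
    induction k using Nat.strong_induction_on with
    | _ k ih =>
      intro hk j
      by_cases hx : N.preact x k j = 0
      · have hyk := preact_eq_spreact_of_hpat_eq (j := j) fun k' hk' => ih k' hk' (hk'.trans hk)
        simp only [Hpat, hyk, hZ k hk j hx, hx]
      · exact hy k hk j hx

theorem spreact_add_smul_eq_zero_iff {x : Input n} (v : Input n) {t : ℝ} (ht : t ≠ 0) {k : ℕ}
    {j : Fin (n (k+1))} (hx : N.preact x k j = 0) :
    N.spreact (N.actPattern x) (x + t • v) k j = 0 ↔
      N.spreact (N.actPattern x) (x + v) k j = 0 := by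
  rw [N.spreact_add_smul, ← preact_eq_spreact_of_hpat_eq fun _ _ _ => rfl, hx]
  simp [ht]

end Net

/-- Lemma 4: for every `x` there is `ε* > 0` with
`B_{ε*}(0) ∩ {v : H(x+v) = H(x)} = B_{ε*}(0) ∩ Ker^C(x)`. -/
theorem statement7 {L : ℕ} {n : ℕ → ℕ} (N : Net L n) (x : Input n) :
    ∃ ε > 0,
      ball (0 : Input n) ε ∩
          {v : Input n | ∀ p : Idx n, p.1 < L → N.Hpat (x + v) p.1 p.2 = N.Hpat x p.1 p.2} =
        ball (0 : Input n) ε ∩ N.KerC x := by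
  obtain ⟨ε, hε, hsign⟩ := Metric.eventually_nhds_iff.mp (N.eventually_sign_preact_eq x)
  have hpat_iff (v : Input n) (hv : ‖v‖ < ε) :
      (∀ p : Idx n, p.1 < L → N.Hpat (x + v) p.1 p.2 = N.Hpat x p.1 p.2) ↔
        ∀ k < L, ∀ j, N.preact x k j = 0 → N.spreact (N.actPattern x) (x + v) k j = 0 := by
    rw [← Net.hpat_eq_iff_spreact_eq_zero (hsign (by simpa [dist_eq_norm] using hv))]
    exact ⟨fun h k hk j => h ⟨k, j⟩ hk, fun h p hp => h p.1 hp p.2⟩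
  refine ⟨ε, hε, ball_inter_setOf_eq_ball_inter_setOf_smul (by simp) fun v t ht hv htv => ?_⟩
  rw [hpat_iff _ htv, hpat_iff _ hv]
  exact forall₂_congr fun k _ => forall₂_congr fun j hx =>
    Net.spreact_add_smul_eq_zero_iff v ht hx

end DRLP
end
end

section
/- For every x ∈ ℝ^{n_0} and every compatible activation pattern s ∈ S^C(x), the critical degrees of freedom satisfy df^C(x) ≥ n_0 − |C̃_s(x)|. -/
/-!
Formalization of the setting of "Deep ReLU Programming" (Hinz & van de Geer).

A feed-forward ReLU network with `L` hidden layers and widths `n 0, …, n (L+1)`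
(`n (L+1) = 1` for a real-valued network) is encoded by the structure `Net L n`
below, where `W k : Matrix (Fin (n (k+1))) (Fin (n k)) ℝ` and
`b k : Fin (n (k+1)) → ℝ` are the weight matrix and bias vector of layer `k+1`
(so the paper's `W_l, b_l` correspond to `W (l-1), b (l-1)` here).

A neuron `(l, j)` of the paper (layer `l ∈ {1, …, L}`, neuron `j`) is encoded as
the pair `⟨k, j⟩ : Idx n` with `k = l - 1`; membership in the index set `I`
corresponds to the condition `k < L`.
-/

noncomputable section
open Metric Filter Topology
open scoped Classical RealInnerProductSpace BigOperators

/-!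
Let `C` be the set of subjective critical indices of `s` at `x`. Along a direction `v`
orthogonal to the normal vectors `ṽ_{s,p}`, `p ∈ C`, the subjective ReLU arguments of the
critical neurons do not move at all (they are affine in the input with these gradients), while
the non-critical ones keep their sign on a neighbourhood of `x`. So `H̃_s` is constant on a short
segment through `x` in direction `v`; as `s` stays compatible with it there, the network agrees
with its subjective version along the segment and `H` is constant too. Hence `Ker^C(x)`
contains the orthogonal complement of at most `|C|` vectors.
-/

open Module Matrix

lemma max_zero_eq_mul_of_sign_mul_nonneg {a σ : ℝ} (hσ : σ = 0 ∨ σ = 1)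
    (h : Real.sign a * (σ - 1/2) ≥ 0) : max a 0 = σ * a := by
  rcases hσ with rfl | rfl <;> rcases lt_trichotomy a 0 with ha | rfl | ha
  all_goals simp_all [Real.sign_of_neg, Real.sign_of_pos, le_of_lt]
  all_goals norm_num at h

lemma Set.finite_setOf_fst_lt {β : ℕ → Type*} [∀ k, Finite (β k)] (L : ℕ) :
    {p : Σ k, β k | p.1 < L}.Finite :=
  (Set.finite_Iio L).preimage' fun k _ =>
    (Set.finite_range (Sigma.mk k)).subset <| by rintro ⟨k', j⟩ rfl; exact ⟨j, rfl⟩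

lemma Module.finrank_span_image_le_ncard {R M ι : Type*} [Ring R] [StrongRankCondition R]
    [AddCommGroup M] [Module R M] {S : Set ι} (hS : S.Finite) (f : ι → M) :
    finrank R (Submodule.span R (f '' S)) ≤ S.ncard := by
  have := (hS.image f).fintype
  calc finrank R (Submodule.span R (f '' S)) ≤ (f '' S).toFinset.card := finrank_span_le_card _
    _ = (f '' S).ncard := (Set.ncard_eq_toFinset_card' _).symm
    _ ≤ S.ncard := Set.ncard_image_le hS

lemma finrank_le_ncard_add_finrank_orthogonal_span {E ι : Type*} [NormedAddCommGroup E]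
    [InnerProductSpace ℝ E] [FiniteDimensional ℝ E] {S : Set ι} (hS : S.Finite) (f : ι → E) :
    finrank ℝ E ≤ S.ncard + finrank ℝ (Submodule.span ℝ (f '' S))ᗮ := by
  rw [← Submodule.finrank_add_finrank_orthogonal (Submodule.span ℝ (f '' S))]
  exact Nat.add_le_add_right (Module.finrank_span_image_le_ncard hS f) _

namespace DRLP

namespace Net

variable {L : ℕ} {n : ℕ → ℕ} (N : Net L n) (s : Pat n)

lemma spreact_eq (y : Input n) (k : ℕ) :
    N.spreact s y k = N.W k *ᵥ N.shid s y k + N.b k := rfl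

lemma shid_succ (y : Input n) (k : ℕ) :
    N.shid s y (k + 1) = diagonal (s k) *ᵥ N.spreact s y k := by
  funext j
  simp [shid, spreact, mulVec_diagonal]

lemma spreact_add (x w : Input n) :
    ∀ k, N.spreact s (x + w) k = N.spreact s x k + N.sMat s k *ᵥ WithLp.ofLp w
  | 0 => by
    rw [spreact_eq, spreact_eq]
    simp only [shid, sMat, WithLp.ofLp_add, mulVec_add]
    abel
  | k + 1 => by
    rw [spreact_eq, spreact_eq, shid_succ, shid_succ, spreact_add x w k]
    simp only [sMat, mulVec_add, mulVec_mulVec, Matrix.mul_assoc]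
    abel

lemma sMat_mulVec_eq_inner (w : Input n) (k : ℕ) (j : Fin (n (k + 1))) :
    (N.sMat s k *ᵥ WithLp.ofLp w) j = ⟪N.nvec s ⟨k, j⟩, w⟫ := by
  simp [Matrix.mulVec, dotProduct, nvec, PiLp.inner_apply, mul_comm]

variable {s}

lemma hid_succ_eq_shid_succ {y : Input n} {k : ℕ} (hk : N.hid y k = N.shid s y k)
    (hσ : ∀ j, s k j = 0 ∨ s k j = 1)
    (hc : ∀ j, Real.sign (N.spreact s y k j) * (s k j - 1/2) ≥ 0) :
    N.hid y (k + 1) = N.shid s y (k + 1) := by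
  funext j
  have hpre : N.preact y k j = N.spreact s y k j := by simp only [preact, spreact, hk]
  show max (N.preact y k j) 0 = s k j * N.spreact s y k j
  rw [hpre]
  exact max_zero_eq_mul_of_sign_mul_nonneg (hσ j) (hc j)

lemma hid_eq_shid_of_mem_SCtilde {y : Input n} (hs : s ∈ N.SCtilde y) :
    ∀ k ≤ L, N.hid y k = N.shid s y k
  | 0, _ => rfl
  | k + 1, hk => N.hid_succ_eq_shid_succ (hid_eq_shid_of_mem_SCtilde hs k (by omega))
      (hs.1 k hk) (hs.2 k hk)

lemma hid_eq_shid_of_mem_SC {x : Input n} (hs : s ∈ N.SC x) :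
    ∀ k ≤ L, N.hid x k = N.shid s x k
  | 0, _ => rfl
  | k + 1, hk => by
    have ih := hid_eq_shid_of_mem_SC hs k (by omega)
    refine N.hid_succ_eq_shid_succ ih (hs.1 k hk) fun j => ?_
    simpa only [Hpat, preact, spreact, ih] using hs.2 k hk j

lemma sHpat_eq_Hpat_of_mem_SC {x : Input n} (hs : s ∈ N.SC x) {k : ℕ} (hk : k < L)
    (j : Fin (n (k + 1))) : N.sHpat s x k j = N.Hpat x k j := by
  simp only [sHpat, Hpat, spreact, preact, N.hid_eq_shid_of_mem_SC hs k hk.le]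

lemma Hpat_eq_sHpat_of_mem_SCtilde {y : Input n} (hs : s ∈ N.SCtilde y) {k : ℕ} (hk : k < L)
    (j : Fin (n (k + 1))) : N.Hpat y k j = N.sHpat s y k j := by
  simp only [sHpat, Hpat, spreact, preact, N.hid_eq_shid_of_mem_SCtilde hs k hk.le]

lemma Hpat_eq_of_sHpat_eq {x y : Input n} (hs : s ∈ N.SC x)
    (hsame : ∀ k < L, ∀ j, N.sHpat s y k j = N.sHpat s x k j) {k : ℕ} (hk : k < L)
    (j : Fin (n (k + 1))) : N.Hpat y k j = N.Hpat x k j := by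
  have hsame' : ∀ k < L, ∀ j, N.sHpat s y k j = N.Hpat x k j := fun k hk j =>
    (hsame k hk j).trans (N.sHpat_eq_Hpat_of_mem_SC hs hk j)
  have hy : s ∈ N.SCtilde y := ⟨hs.1, fun k hk j => hsame' k hk j ▸ hs.2 k hk j⟩
  rw [N.Hpat_eq_sHpat_of_mem_SCtilde hy hk, hsame' k hk]

lemma eventually_sHpat_eq_of_not_sCritical {x : Input n} {k : ℕ} (hk : k < L)
    {j : Fin (n (k + 1))} (h : ¬ N.sCritical s x ⟨k, j⟩) :
    ∀ᶠ y in 𝓝 x, N.sHpat s y k j = N.sHpat s x k j := by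
  simp only [sCritical, not_and, not_forall, not_exists, not_not] at h
  obtain ⟨ε, hε, hloc⟩ := h hk
  exact Metric.eventually_nhds_iff.2 ⟨ε, hε, fun y hy => hloc y x hy (by simpa using hε)⟩

lemma eventually_forall_sHpat_eq_of_not_sCritical (x : Input n) :
    ∀ᶠ y in 𝓝 x, ∀ k < L, ∀ j, ¬ N.sCritical s x ⟨k, j⟩ →
      N.sHpat s y k j = N.sHpat s x k j := by
  refine (Set.finite_Iio L).eventually_all.2 fun k hk => Filter.eventually_all.2 fun j => ?_
  by_cases h : N.sCritical s x ⟨k, j⟩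
  · exact .of_forall fun _ h' => absurd h h'
  · exact (N.eventually_sHpat_eq_of_not_sCritical hk h).mono fun _ hy _ => hy

lemma orthogonal_span_nvec_sCritical_subset_KerC {x : Input n} (hs : s ∈ N.SC x) :
    ((Submodule.span ℝ (N.nvec s '' {p | N.sCritical s x p}))ᗮ : Set (Input n)) ⊆
      N.KerC x := by
  intro v hv
  have horth : ∀ p, N.sCritical s x p → ⟪N.nvec s p, v⟫ = 0 := fun p hp =>
    (Submodule.mem_orthogonal _ _).1 hv _ (Submodule.subset_span ⟨p, hp, rfl⟩)
  have hline : Tendsto (fun t : ℝ => x + t • v) (𝓝 0) (𝓝 x) :=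
    (continuous_const.add (continuous_id.smul continuous_const)).tendsto' 0 x (by simp)
  obtain ⟨ε, hε, hball⟩ := Metric.eventually_nhds_iff.1
    (hline.eventually (N.eventually_forall_sHpat_eq_of_not_sCritical x))
  refine ⟨ε, hε, fun t ht p hp => N.Hpat_eq_of_sHpat_eq hs (fun k hk j => ?_) hp p.2⟩
  by_cases hcrit : N.sCritical s x ⟨k, j⟩
  · rw [sHpat, sHpat, spreact_add, Pi.add_apply, sMat_mulVec_eq_inner, inner_smul_right,
      horth _ hcrit, mul_zero, add_zero]
  · exact hball (by simpa using ht) k hk j hcrit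

end Net

/-- Lemma 5: for every `x` and every compatible `s ∈ S^C(x)`,
`df^C(x) ≥ n_0 - |C̃_s(x)|`. -/
theorem statement8 {L : ℕ} {n : ℕ → ℕ} (N : Net L n) (x : Input n) (s : Pat n)
    (hs : s ∈ N.SC x) :
    (n 0 : ℤ) - ({p : Idx n | N.sCritical s x p}.ncard : ℤ) ≤ (N.dfC x : ℤ) := by
  have hfin : {p : Idx n | N.sCritical s x p}.Finite :=
    (Set.finite_setOf_fst_lt L).subset fun _ hp => hp.1
  have hdim := finrank_le_ncard_add_finrank_orthogonal_span hfin (N.nvec s)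
  have hker : finrank ℝ (Submodule.span ℝ (N.nvec s '' {p | N.sCritical s x p}))ᗮ ≤ N.dfC x :=
    Submodule.finrank_mono fun _ hv =>
      Submodule.subset_span (N.orthogonal_span_nvec_sCritical_subset_KerC hs hv)
  rw [finrank_euclideanSpace_fin] at hdim
  omega

end DRLP
end
end
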